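/- arXiv:2304.11958 — 3 statements merged into one kernel-verified Lean document; each statement's English description precedes it below -/
import Mathlib

section
/- If X is a real random variable with E[exp(|X|/c)] ≤ 2 for some c > 0, then for every real p ≥ 1, E[|X|^p] ≤ 2·p·(c·p)^p. -/
open MeasureTheory Real

/-- `y ≤ exp y` at `y = x / (c p)`, raised to the power `p`. -/
lemma rpow_le_mul_exp_div {x c p : ℝ} (hx : 0 ≤ x) (hc : 0 < c) (hp : 0 < p) :
    x ^ p ≤ (c * p) ^ p * exp (x / c) := by
  have hcp : 0 < c * p := mul_pos hc hp
  have hy : 0 ≤ x / (c * p) := div_nonneg hx hcp.le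
  calc x ^ p = (c * p) ^ p * (x / (c * p)) ^ p := by
        rw [← mul_rpow hcp.le hy, mul_div_cancel₀ x hcp.ne']
    _ ≤ (c * p) ^ p * exp (x / (c * p)) ^ p := by
        gcongr
        linarith [add_one_le_exp (x / (c * p))]
    _ = (c * p) ^ p * exp (x / c) := by
        rw [← exp_mul, div_mul_eq_div_div, div_mul_cancel₀ _ hp.ne']

theorem psi1_moment_bound_general {Ω : Type*} [MeasurableSpace Ω] (μ : Measure Ω)
    (X : Ω → ℝ) (c : ℝ) (hc : 0 < c)
    (hInt : Integrable (fun ω => Real.exp (|X ω| / c)) μ)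
    (hψ : ∫ ω, Real.exp (|X ω| / c) ∂μ ≤ 2)
    (p : ℝ) (hp : 1 ≤ p) :
    ∫ ω, |X ω| ^ p ∂μ ≤ 2 * p * (c * p) ^ p := by
  have hp0 : 0 < p := zero_lt_one.trans_le hp
  have hcp : 0 ≤ (c * p) ^ p := rpow_nonneg (mul_pos hc hp0).le p
  calc ∫ ω, |X ω| ^ p ∂μ ≤ ∫ ω, (c * p) ^ p * exp (|X ω| / c) ∂μ :=
        integral_mono_of_nonneg (.of_forall fun ω => rpow_nonneg (abs_nonneg _) p)
          (hInt.const_mul _) (.of_forall fun ω => rpow_le_mul_exp_div (abs_nonneg _) hc hp0)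
    _ = (c * p) ^ p * ∫ ω, exp (|X ω| / c) ∂μ := integral_const_mul _ _
    _ ≤ (c * p) ^ p * 2 := by gcongr
    _ ≤ 2 * p * (c * p) ^ p := by nlinarith

/-- If `E[exp(|X|/c)] ≤ 2` for some `c > 0`, then for every real `p ≥ 1`,
`E[|X|^p] ≤ 2·p·(c·p)^p`. -/
theorem psi1_moment_bound {Ω : Type*} [MeasurableSpace Ω] (μ : Measure Ω)
    [IsProbabilityMeasure μ] (X : Ω → ℝ) (c : ℝ) (hc : 0 < c)
    (hInt : Integrable (fun ω => Real.exp (|X ω| / c)) μ)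
    (hψ : ∫ ω, Real.exp (|X ω| / c) ∂μ ≤ 2)
    (p : ℝ) (hp : 1 ≤ p)
    (hmom : Integrable (fun ω => |X ω| ^ p) μ) :
    ∫ ω, |X ω| ^ p ∂μ ≤ 2 * p * (c * p) ^ p :=
  psi1_moment_bound_general μ X c hc hInt hψ p hp
end

section
/- Let s ≤ d with d/s ≥ 3, r₂ > 0, and r₁ = 3√s·r₂. Then the set K = r₁·B₁^d ∩ r₂·B₂^d (intersection of the ℓ₁-ball of radius r₁ and ℓ₂-ball of radius r₂ in ℝ^d) is contained in 2·conv((r₁/r₂)²·B₀^d ∩ r₂·B₂^d), twice the convex hull of the set of vectors with at most (r₁/r₂)² = 9s nonzero entries and ℓ₂-norm at most r₂. -/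
/-!
Sort the coordinates of `v` by decreasing absolute value and cut them into consecutive blocks
of `k = 9s` coordinates, `v = ∑ uₘ`. The first block has `‖u₀‖₂ ≤ ‖v‖₂ ≤ r₂`. Every entry of
block `m + 1` is at most the average `‖uₘ‖₁ / k` of the full block `m`, so
`‖uₘ₊₁‖₂ ≤ ‖uₘ‖₁ / √k`, and summing gives `∑ ‖uₘ‖₂ ≤ r₂ + r₁ / √k = 2 r₂`. Rescaling each block
to norm `r₂` then writes `v / 2` as a combination of `k`-sparse vectors of norm `r₂` with
weights `‖uₘ‖₂ / (2 r₂)` of total mass at most one; the missing mass goes to `0`.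
-/

open Pointwise Finset

section ConvexHull

variable {ι E : Type*}

theorem Convex.sum_smul_mem_of_sum_le_one [AddCommGroup E] [Module ℝ E] {C : Set E}
    (hC : Convex ℝ C) (h0 : (0 : E) ∈ C) {t : Finset ι} {w : ι → ℝ} {z : ι → E}
    (hw₀ : ∀ i ∈ t, 0 ≤ w i) (hw₁ : ∑ i ∈ t, w i ≤ 1) (hz : ∀ i ∈ t, z i ∈ C) :
    ∑ i ∈ t, w i • z i ∈ C := by
  rcases (sum_nonneg hw₀).eq_or_lt with hW | hW
  · rw [sum_eq_zero fun i hi => by rw [(sum_eq_zero_iff_of_nonneg hw₀).1 hW.symm i hi, zero_smul]]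
    exact h0
  · have := hC.smul_mem_of_zero_mem h0 (hC.centerMass_mem hw₀ hW hz) ⟨hW.le, hw₁⟩
    rwa [centerMass, smul_smul, mul_inv_cancel₀ hW.ne', one_smul] at this

theorem sum_mem_smul_convexHull_of_sum_norm_le [NormedAddCommGroup E] [NormedSpace ℝ E]
    {S : Set E} (h0 : (0 : E) ∈ S) {r c : ℝ} (hr : 0 < r) (hc : 0 < c) {t : Finset ι}
    {u : ι → E} (hS : ∀ m ∈ t, (r / ‖u m‖) • u m ∈ S) (hsum : ∑ m ∈ t, ‖u m‖ ≤ c * r) :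
    ∑ m ∈ t, u m ∈ c • convexHull ℝ S := by
  rw [Set.mem_smul_set_iff_inv_smul_mem₀ hc.ne', smul_sum]
  have hrescale : ∀ m, c⁻¹ • u m = (‖u m‖ / (c * r)) • (r / ‖u m‖) • u m := by
    intro m
    rcases eq_or_ne (u m) 0 with hu | hu
    · simp [hu]
    · rw [smul_smul]
      congr 1
      field_simp [norm_ne_zero_iff.2 hu]
  simp only [hrescale]
  refine (convex_convexHull ℝ S).sum_smul_mem_of_sum_le_one (subset_convexHull ℝ S h0)
    (fun m _ => by positivity) ?_ fun m hm => subset_convexHull ℝ S (hS m hm)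
  rwa [← sum_div, div_le_one (by positivity)]

end ConvexHull

theorem sqrt_sum_sq_le_of_card_le {ι : Type*} {s : Finset ι} {x : ι → ℝ} {k : ℕ} {L : ℝ}
    (hk : 0 < k) (hL : 0 ≤ L) (hs : #s ≤ k) (hx : ∀ i ∈ s, k * |x i| ≤ L) :
    √(∑ i ∈ s, x i ^ 2) ≤ L / √k := by
  have hk' : (0 : ℝ) < k := by exact_mod_cast hk
  have hsq : ∑ i ∈ s, x i ^ 2 ≤ L ^ 2 / k :=
    calc ∑ i ∈ s, x i ^ 2 ≤ ∑ i ∈ s, (L / k) ^ 2 := sum_le_sum fun i hi => by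
          rw [← sq_abs]
          gcongr
          rw [le_div_iff₀ hk', mul_comm]
          exact hx i hi
      _ = #s * (L / k) ^ 2 := by rw [sum_const, nsmul_eq_mul]
      _ ≤ k * (L / k) ^ 2 := by gcongr
      _ = L ^ 2 / k := by field_simp
  rw [← Real.sqrt_sq hL, ← Real.sqrt_div' _ hk'.le]
  exact Real.sqrt_le_sqrt hsq

section Restrict

variable {ι : Type*}

noncomputable def restrictTo (s : Finset ι) (v : EuclideanSpace ℝ ι) : EuclideanSpace ℝ ι :=
  WithLp.toLp 2 ((s : Set ι).indicator v)

theorem norm_restrictTo [Fintype ι] (s : Finset ι) (v : EuclideanSpace ℝ ι) :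
    ‖restrictTo s v‖ = √(∑ i ∈ s, v i ^ 2) := by
  classical
  simp [restrictTo, EuclideanSpace.norm_eq, Set.indicator_apply, apply_ite, sum_ite_mem]

theorem norm_restrictTo_le [Fintype ι] (s : Finset ι) (v : EuclideanSpace ℝ ι) :
    ‖restrictTo s v‖ ≤ ‖v‖ := by
  rw [norm_restrictTo, EuclideanSpace.norm_eq]
  simp only [Real.norm_eq_abs, sq_abs]
  exact Real.sqrt_le_sqrt (sum_le_sum_of_subset_of_nonneg (subset_univ s) fun i _ _ => sq_nonneg _)

theorem support_restrictTo_subset (s : Finset ι) (v : EuclideanSpace ℝ ι) :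
    Function.support (restrictTo s v) ⊆ s :=
  Set.support_indicator_subset

theorem sum_restrictTo_fiberwise [Fintype ι] {κ : Type*} [DecidableEq κ]
    (v : EuclideanSpace ℝ ι) (b : ι → κ) {t : Finset κ} (hb : ∀ i, b i ∈ t) :
    ∑ m ∈ t, restrictTo {i | b i = m} v = v := by
  ext i
  simp [restrictTo, WithLp.ofLp_sum, Finset.sum_apply, Set.indicator_apply, hb]

end Restrict

section SortedBlocks

variable {ι : Type*} [Fintype ι] {n : ℕ} (e : Fin n ≃ ι) (k : ℕ)

theorem exists_equiv_fin_antitone {α : Type*} [LinearOrder α] (f : ι → α) :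
    ∃ e : Fin (Fintype.card ι) ≃ ι, Antitone (f ∘ e) := by
  set g := OrderDual.toDual ∘ f ∘ (Fintype.equivFin ι).symm
  exact ⟨(Tuple.sort g).trans (Fintype.equivFin ι).symm, fun a b hab => Tuple.monotone_sort g hab⟩

def sortedBlock (m : ℕ) : Finset ι := {i | (e.symm i : ℕ) / k = m}

theorem card_sortedBlock (m : ℕ) : #(sortedBlock e k m) = #{a ∈ range n | a / k = m} := by
  have himage :
      (sortedBlock e k m).image (fun i => (e.symm i : ℕ)) = {a ∈ range n | a / k = m} := by
    ext a
    simp only [sortedBlock, mem_image, mem_filter, mem_univ, true_and, mem_range]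
    constructor
    · rintro ⟨i, hi, rfl⟩
      exact ⟨(e.symm i).isLt, hi⟩
    · rintro ⟨ha, hm⟩
      exact ⟨e ⟨a, ha⟩, by simpa using hm, by simp⟩
  rw [← himage, card_image_of_injective _ fun i j h => e.symm.injective (Fin.ext h)]

theorem card_sortedBlock_le (hk : 0 < k) (m : ℕ) : #(sortedBlock e k m) ≤ k := by
  rw [card_sortedBlock]
  calc #{a ∈ range n | a / k = m} ≤ #(Ico (m * k) (m * k + k)) := card_le_card fun a ha => by
        simp only [mem_filter, mem_range, Nat.div_eq_iff hk, mem_Ico] at ha ⊢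
        omega
    _ = k := by simp

theorem card_sortedBlock_eq (hk : 0 < k) {m : ℕ} (hm : (m + 1) * k ≤ n) :
    #(sortedBlock e k m) = k := by
  rw [card_sortedBlock, show {a ∈ range n | a / k = m} = Ico (m * k) (m * k + k) by
    ext a
    simp only [mem_filter, mem_range, Nat.div_eq_iff hk, mem_Ico]
    rw [add_one_mul] at hm
    omega]
  simp

theorem mul_abs_le_sum_sortedBlock (hk : 0 < k) {v : ι → ℝ} (hv : Antitone fun a => |v (e a)|)
    {m : ℕ} {i : ι} (hi : i ∈ sortedBlock e k (m + 1)) :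
    k * |v i| ≤ ∑ j ∈ sortedBlock e k m, |v j| := by
  simp only [sortedBlock, mem_filter, mem_univ, true_and] at hi
  have hfull : #(sortedBlock e k m) = k :=
    card_sortedBlock_eq e k hk (((Nat.div_eq_iff hk).1 hi).1.trans (e.symm i).isLt.le)
  have hle : ∀ j ∈ sortedBlock e k m, |v i| ≤ |v j| := by
    intro j hj
    simp only [sortedBlock, mem_filter, mem_univ, true_and] at hj
    have hji : e.symm j ≤ e.symm i := (Nat.lt_of_div_lt_div (c := k) (by omega)).le
    simpa using hv hji
  calc (k : ℝ) * |v i| = ∑ j ∈ sortedBlock e k m, |v i| := by rw [sum_const, hfull, nsmul_eq_mul]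
    _ ≤ ∑ j ∈ sortedBlock e k m, |v j| := sum_le_sum hle

end SortedBlocks

theorem exists_sparse_decomposition {ι : Type*} [Fintype ι] {k : ℕ} (hk : 0 < k)
    (v : EuclideanSpace ℝ ι) :
    ∃ (N : ℕ) (u : ℕ → EuclideanSpace ℝ ι), ∑ m ∈ range N, u m = v ∧
      (∀ m, (Function.support (u m)).ncard ≤ k) ∧
      ∑ m ∈ range N, ‖u m‖ ≤ ‖v‖ + (∑ i, |v i|) / √k := by
  obtain ⟨e, he⟩ := exists_equiv_fin_antitone fun i => |v i|
  set B := sortedBlock e k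
  have hB : ∀ i, (e.symm i : ℕ) / k ∈ range (Fintype.card ι + 1) := fun i =>
    mem_range.2 (Nat.lt_succ_of_lt ((Nat.div_le_self _ _).trans_lt (e.symm i).isLt))
  refine ⟨Fintype.card ι + 1, fun m => restrictTo (B m) v, sum_restrictTo_fiberwise v _ hB,
    fun m => ?_, ?_⟩
  · calc (Function.support (restrictTo (B m) v)).ncard ≤ (B m : Set ι).ncard :=
          Set.ncard_le_ncard (support_restrictTo_subset _ _)
      _ = #(B m) := Set.ncard_coe_finset _
      _ ≤ k := card_sortedBlock_le e k hk m
  · have hmass : ∑ m ∈ range (Fintype.card ι + 1), ∑ j ∈ B m, |v j| = ∑ i, |v i| :=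
      sum_fiberwise_of_maps_to (fun i _ => hB i) _
    have htail : ∀ m, ‖restrictTo (B (m + 1)) v‖ ≤ (∑ j ∈ B m, |v j|) / √k := fun m => by
      rw [norm_restrictTo]
      exact sqrt_sum_sq_le_of_card_le hk (sum_nonneg fun _ _ => abs_nonneg _)
        (card_sortedBlock_le e k hk _) fun i hi => mul_abs_le_sum_sortedBlock e k hk he hi
    rw [sum_range_succ', add_comm]
    gcongr
    · exact norm_restrictTo_le _ _
    · calc ∑ m ∈ range (Fintype.card ι), ‖restrictTo (B (m + 1)) v‖
            ≤ ∑ m ∈ range (Fintype.card ι), (∑ j ∈ B m, |v j|) / √k :=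
            sum_le_sum fun m _ => htail m
        _ ≤ (∑ i, |v i|) / √k := by
            rw [← sum_div, ← hmass]
            gcongr
            exact Nat.le_succ _

theorem mem_two_smul_convexHull_sparse {ι : Type*} [Fintype ι] {k : ℕ} (hk : 0 < k) {r : ℝ}
    (hr : 0 < r) {v : EuclideanSpace ℝ ι} (hv₁ : ∑ i, |v i| ≤ √k * r) (hv₂ : ‖v‖ ≤ r) :
    v ∈ (2 : ℝ) • convexHull ℝ
      {w : EuclideanSpace ℝ ι | (Function.support w).ncard ≤ k ∧ ‖w‖ ≤ r} := by
  obtain ⟨N, u, hsum, hsupp, hnorm⟩ := exists_sparse_decomposition hk v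
  rw [← hsum]
  refine sum_mem_smul_convexHull_of_sum_norm_le ?_ hr two_pos (fun m _ => ⟨?_, ?_⟩) ?_
  · simp [hr.le]
  · rw [WithLp.ofLp_smul]
    exact (Set.ncard_le_ncard (Function.support_const_smul_subset _ _)).trans (hsupp m)
  · rcases eq_or_ne (u m) 0 with hu | hu
    · simp [hu, hr.le]
    · rw [norm_smul, Real.norm_eq_abs, abs_of_nonneg (by positivity),
        div_mul_cancel₀ _ (norm_ne_zero_iff.2 hu)]
  · have hk' : (0 : ℝ) < √k := Real.sqrt_pos.2 (by exact_mod_cast hk)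
    calc ∑ m ∈ range N, ‖u m‖ ≤ r + √k * r / √k := hnorm.trans (by gcongr)
      _ = 2 * r := by field_simp; ring

theorem ell1_ell2_ball_subset_convexHull_sparse_general (d s : ℕ) (hs : 1 ≤ s)
    (r₁ r₂ : ℝ) (hr₂ : 0 < r₂)
    (hr₁ : r₁ = 3 * Real.sqrt s * r₂) :
    {v : EuclideanSpace ℝ (Fin d) | (∑ i, |v i|) ≤ r₁ ∧ ‖v‖ ≤ r₂} ⊆
      (2 : ℝ) • convexHull ℝ
        {v : EuclideanSpace ℝ (Fin d) |
          ((Function.support v).ncard : ℝ) ≤ (r₁ / r₂) ^ 2 ∧ ‖v‖ ≤ r₂} := by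
  have hsqrt : √((9 * s : ℕ) : ℝ) = 3 * √s := by
    rw [Nat.cast_mul, Real.sqrt_mul (by norm_num), show ((9 : ℕ) : ℝ) = 3 ^ 2 by norm_num,
      Real.sqrt_sq (by norm_num)]
  have hratio : (r₁ / r₂) ^ 2 = ((9 * s : ℕ) : ℝ) := by
    rw [hr₁, mul_div_cancel_right₀ _ hr₂.ne', mul_pow, Real.sq_sqrt (Nat.cast_nonneg s)]
    push_cast
    ring
  rintro v ⟨hv₁, hv₂⟩
  refine Set.smul_set_mono (convexHull_mono ?_)
    (mem_two_smul_convexHull_sparse (k := 9 * s) (by omega) hr₂ (by rwa [hsqrt, ← hr₁]) hv₂)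
  rintro w ⟨hw, hw'⟩
  exact ⟨by rw [hratio]; exact_mod_cast hw, hw'⟩

/-- Plan–Vershynin (2013), Lemma 3.1: with `r₁ = 3√s·r₂`, the intersection of the
`ℓ₁`-ball of radius `r₁` and the `ℓ₂`-ball of radius `r₂` in `ℝ^d` is contained in
twice the convex hull of the set of `(r₁/r₂)²`-sparse vectors of `ℓ₂`-norm at most `r₂`. -/
theorem ell1_ell2_ball_subset_convexHull_sparse (d s : ℕ) (hs : 1 ≤ s) (hsd : s ≤ d)
    (hds : 3 ≤ (d : ℝ) / s) (r₁ r₂ : ℝ) (hr₂ : 0 < r₂)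
    (hr₁ : r₁ = 3 * Real.sqrt s * r₂) :
    {v : EuclideanSpace ℝ (Fin d) | (∑ i, |v i|) ≤ r₁ ∧ ‖v‖ ≤ r₂} ⊆
      (2 : ℝ) • convexHull ℝ
        {v : EuclideanSpace ℝ (Fin d) |
          ((Function.support v).ncard : ℝ) ≤ (r₁ / r₂) ^ 2 ∧ ‖v‖ ≤ r₂} :=
  ell1_ell2_ball_subset_convexHull_sparse_general d s hs r₁ r₂ hr₂ hr₁
end

section
/- Let s ≤ d with d/s ≥ 3 and r > 0. Then the Dudley entropy integral of the set T = {v ∈ ℝ^d : ‖v‖₀ ≤ 9s, ‖v‖₂ ≤ r} satisfies ∫₀^r √(log N(T, ε)) dε ≤ C·r·√(s·log(d/s)) for a universal constant C. -/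
/-!
A vector of `T` lies in the `r`-ball of one of the `C(d, k)` coordinate subspaces of dimension
`k = min (9s) d`, and a volume argument gives each such ball an `ε`-net of size `(3r/ε)^k`, so
`log N(T, ε) ≤ log C(d, k) + k log (3r/ε)` with `C(d, k) ≤ (e d / k)^k ≤ (d/s)^(2k)`.
Bounding `log t ≤ t` dominates `√(log N(T, ε))` by a constant plus a multiple of `ε^(-1/2)`,
whose integral over `[0, r]` is of order `r √(s log (d/s))`.
-/

open MeasureTheory Module Real

/-- The minimal cardinality of an `ε`-net (covering number) of a set `T` in `ℝ^d`. -/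
noncomputable def coveringNumber {d : ℕ} (T : Set (EuclideanSpace ℝ (Fin d)))
    (ε : ℝ) : ℕ :=
  sInf {n : ℕ | ∃ F : Finset (EuclideanSpace ℝ (Fin d)), F.card = n ∧
    ∀ v ∈ T, ∃ u ∈ F, ‖v - u‖ ≤ ε}

open Metric in
/-- The balls of radius `ε / 2` around the points of `P` are disjoint and lie in
`ball x (r + ε / 2)`; compare their Haar measures. -/
theorem Finset.card_le_of_pairwise_lt_dist {E : Type*} [NormedAddCommGroup E] [NormedSpace ℝ E]
    [FiniteDimensional ℝ E] {P : Finset E} {x : E} {r ε : ℝ} (hr : 0 ≤ r)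
    (hε : 0 < ε) (hPr : ↑P ⊆ closedBall x r)
    (hP : (P : Set E).Pairwise fun p q ↦ ε < dist p q) :
    (P.card : ℝ) ≤ ((2 * r + ε) / ε) ^ finrank ℝ E := by
  borelize E
  set μ : Measure E := Measure.addHaar
  have hvol : (P.card : ENNReal) * μ (ball 0 (ε / 2)) ≤ μ (ball 0 (r + ε / 2)) :=
    calc (P.card : ENNReal) * μ (ball 0 (ε / 2)) = ∑ p ∈ P, μ (ball p (ε / 2)) := by
          simp [Measure.addHaar_ball_center]
      _ = μ (⋃ p ∈ P, ball p (ε / 2)) :=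
          (measure_biUnion_finset (fun p hp q hq hpq ↦ ball_disjoint_ball (by
            linarith [hP hp hq hpq])) fun _ _ ↦ measurableSet_ball).symm
      _ ≤ μ (ball x (r + ε / 2)) := measure_mono <| Set.iUnion₂_subset fun p hp ↦
          ball_subset_ball' (by linarith [mem_closedBall.mp (hPr hp)])
      _ = μ (ball 0 (r + ε / 2)) := Measure.addHaar_ball_center _ _ _
  rw [Measure.addHaar_ball_of_pos μ 0 (r := ε / 2) (by positivity),
    Measure.addHaar_ball_of_pos μ 0 (r := r + ε / 2) (by positivity), ← mul_assoc,
    ENNReal.mul_le_mul_iff_left (measure_ball_pos μ 0 one_pos).ne' measure_ball_lt_top.ne,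
    ← ENNReal.ofReal_natCast, ← ENNReal.ofReal_mul (by positivity),
    ENNReal.ofReal_le_ofReal_iff (by positivity)] at hvol
  calc (P.card : ℝ) = P.card * (ε / 2) ^ finrank ℝ E / (ε / 2) ^ finrank ℝ E := by
        field_simp
    _ ≤ (r + ε / 2) ^ finrank ℝ E / (ε / 2) ^ finrank ℝ E := by gcongr
    _ = ((2 * r + ε) / ε) ^ finrank ℝ E := by rw [← div_pow]; congr 1; field_simp

/-- A maximal `ε`-separated subset of `A` is an `ε`-net of `A`. -/
theorem exists_finset_cover_card_le_of_separated {X : Type*} [MetricSpace X] {A : Set X}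
    {ε M : ℝ} (hε : 0 ≤ ε)
    (hM : ∀ P : Finset X, ↑P ⊆ A → (P : Set X).Pairwise (fun p q ↦ ε < dist p q) →
      (P.card : ℝ) ≤ M) :
    ∃ F : Finset X, (F.card : ℝ) ≤ M ∧ ∀ x ∈ A, ∃ y ∈ F, dist x y ≤ ε := by
  classical
  set cards : Set ℕ := {n | ∃ P : Finset X, ↑P ⊆ A ∧
    (P : Set X).Pairwise (fun p q ↦ ε < dist p q) ∧ P.card = n}
  have hbdd : BddAbove cards := ⟨⌊M⌋₊, by
    rintro _ ⟨P, hPA, hP, rfl⟩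
    exact Nat.le_floor (hM P hPA hP)⟩
  obtain ⟨P, hPA, hP, hPcard⟩ : sSup cards ∈ cards := Nat.sSup_mem ⟨0, ∅, by simp⟩ hbdd
  refine ⟨P, hM P hPA hP, fun x hx ↦ ?_⟩
  by_contra! hfar
  have hxP : x ∉ P := fun hxP ↦ by simpa using (hfar x hxP).trans_le' hε
  have hins : (insert x P).card ∈ cards := ⟨insert x P, by simp [Set.insert_subset hx hPA],
    by simpa using hP.insert fun y hy _ ↦ ⟨hfar y hy, dist_comm x y ▸ hfar y hy⟩, rfl⟩
  have := le_csSup hbdd hins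
  rw [Finset.card_insert_of_notMem hxP] at this
  omega

namespace EuclideanSpace

variable {ι : Type*} [Fintype ι]

def supportedOn (S : Finset ι) : Submodule ℝ (EuclideanSpace ℝ ι) where
  carrier := {v | Function.support v ⊆ S}
  zero_mem' := by simp
  add_mem' hu hv := (Function.support_add _ _).trans (Set.union_subset hu hv)
  smul_mem' c _ hv := (Function.support_const_smul_subset c _).trans hv

theorem finrank_supportedOn_le (S : Finset ι) : finrank ℝ (supportedOn S) ≤ S.card := by
  let restrict : supportedOn S →ₗ[ℝ] (S → ℝ) :=
    (LinearMap.pi fun i : S ↦ projₗ (i : ι)) ∘ₗ (supportedOn S).subtype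
  have hinj : Function.Injective restrict := by
    intro u v huv
    ext i
    by_cases hi : i ∈ S
    · exact congr_fun huv ⟨i, hi⟩
    · rw [Function.notMem_support.mp fun h ↦ hi (u.2 h),
        Function.notMem_support.mp fun h ↦ hi (v.2 h)]
  simpa using LinearMap.finrank_le_finrank_of_injective hinj

theorem card_le_of_pairwise_lt_dist_of_support_subset {S : Finset ι}
    {P : Finset (EuclideanSpace ℝ ι)} {r ε : ℝ} (hε : 0 < ε) (hεr : ε ≤ r)
    (hPS : ↑P ⊆ {v : EuclideanSpace ℝ ι | Function.support v ⊆ S ∧ ‖v‖ ≤ r})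
    (hP : (P : Set (EuclideanSpace ℝ ι)).Pairwise fun p q ↦ ε < dist p q) :
    (P.card : ℝ) ≤ (3 * r / ε) ^ S.card := by
  classical
  set Q : Finset (supportedOn S) := P.subtype (· ∈ supportedOn S)
  have hQ : Q.card = P.card := by
    rw [← Finset.card_map,
      Finset.subtype_map_of_mem (p := (· ∈ supportedOn S)) fun p hp ↦ (hPS hp).1]
  have hQr : ↑Q ⊆ Metric.closedBall (0 : supportedOn S) r := fun q hq ↦ by
    simpa using (hPS (Finset.mem_subtype.mp hq)).2
  have hQsep : (Q : Set (supportedOn S)).Pairwise fun p q ↦ ε < dist p q :=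
    fun p hp q hq hpq ↦ hP (Finset.mem_subtype.mp hp) (Finset.mem_subtype.mp hq)
      (Subtype.coe_ne_coe.mpr hpq)
  calc (P.card : ℝ) = Q.card := by rw [hQ]
    _ ≤ ((2 * r + ε) / ε) ^ finrank ℝ (supportedOn S) :=
        Q.card_le_of_pairwise_lt_dist (hε.le.trans hεr) hε hQr hQsep
    _ ≤ (3 * r / ε) ^ finrank ℝ (supportedOn S) :=
        pow_le_pow_left₀ (div_nonneg (by linarith) hε.le) (by gcongr; linarith) _
    _ ≤ (3 * r / ε) ^ S.card :=
        pow_le_pow_right₀ ((one_le_div hε).mpr (by linarith)) (finrank_supportedOn_le S)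

end EuclideanSpace

theorem coveringNumber_le_card {d : ℕ} {T : Set (EuclideanSpace ℝ (Fin d))} {ε : ℝ}
    (F : Finset (EuclideanSpace ℝ (Fin d))) (hF : ∀ v ∈ T, ∃ u ∈ F, ‖v - u‖ ≤ ε) :
    coveringNumber T ε ≤ F.card :=
  Nat.sInf_le ⟨F, rfl, hF⟩

open Finset in
theorem coveringNumber_le_choose_mul_pow {d k : ℕ} (hkd : k ≤ d)
    {T : Set (EuclideanSpace ℝ (Fin d))} {r ε : ℝ} (hε : 0 < ε) (hεr : ε ≤ r)
    (hT : ∀ v ∈ T, (Function.support v).ncard ≤ k ∧ ‖v‖ ≤ r) :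
    (coveringNumber T ε : ℝ) ≤ d.choose k * (3 * r / ε) ^ k := by
  classical
  choose F hFcard hFcover using fun S : Finset (Fin d) ↦
    exists_finset_cover_card_le_of_separated hε.le fun _ ↦
      EuclideanSpace.card_le_of_pairwise_lt_dist_of_support_subset (S := S) hε hεr
  have hcover : ∀ v ∈ T, ∃ u ∈ (powersetCard k univ).biUnion F, ‖v - u‖ ≤ ε := by
    intro v hv
    obtain ⟨S, hvS, -, hS⟩ := exists_subsuperset_card_eq (n := k)
      (subset_univ (Function.support v).toFinset)
      (by rw [← Set.ncard_eq_toFinset_card']; exact (hT v hv).1) (by simpa using hkd)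
    obtain ⟨u, hu, hvu⟩ := hFcover S v ⟨by simpa using coe_subset.mpr hvS, (hT v hv).2⟩
    exact ⟨u, mem_biUnion.mpr ⟨S, mem_powersetCard_univ.mpr hS, hu⟩,
      dist_eq_norm v u ▸ hvu⟩
  calc (coveringNumber T ε : ℝ) ≤ ((powersetCard k univ).biUnion F).card := by
        exact_mod_cast coveringNumber_le_card _ hcover
    _ ≤ ∑ S ∈ powersetCard k univ, ((F S).card : ℝ) := by exact_mod_cast card_biUnion_le
    _ ≤ ∑ S ∈ powersetCard k univ, (3 * r / ε) ^ k :=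
        sum_le_sum fun S hS ↦ (mem_powersetCard_univ.mp hS) ▸ hFcard S
    _ = d.choose k * (3 * r / ε) ^ k := by simp

theorem Nat.choose_le_exp_one_mul_div_pow (n k : ℕ) :
    (n.choose k : ℝ) ≤ (exp 1 * n / k) ^ k := by
  rcases k.eq_zero_or_pos with rfl | hk
  · simp
  -- `k ^ k / k! ≤ e ^ k` is one term of the series of `exp k`
  have hfac := pow_div_factorial_le_exp (k : ℝ) k.cast_nonneg k
  rw [← exp_one_pow] at hfac
  calc (n.choose k : ℝ) ≤ (n : ℝ) ^ k / k.factorial := Nat.choose_le_pow_div k n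
    _ = (n / k : ℝ) ^ k * ((k : ℝ) ^ k / k.factorial) := by
        rw [div_pow]; field_simp
    _ ≤ (n / k : ℝ) ^ k * exp 1 ^ k := by gcongr
    _ = (exp 1 * n / k) ^ k := by rw [← mul_pow]; ring

theorem log_choose_le_two_mul_log_div {d k s : ℕ} (hs : 0 < s) (hsk : s ≤ k) (hkd : k ≤ d)
    (hds : exp 1 ≤ d / s) : log (d.choose k) ≤ 2 * k * log (d / s) := by
  have hbase : exp 1 * d / k ≤ (d / s) ^ 2 :=
    calc exp 1 * d / k ≤ exp 1 * (d / s) := by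
          rw [mul_div_assoc]; gcongr
      _ ≤ (d / s) ^ 2 := by rw [sq]; gcongr
  calc log (d.choose k) ≤ log (((d / s : ℝ) ^ 2) ^ k) :=
        log_le_log (by exact_mod_cast Nat.choose_pos hkd)
          ((Nat.choose_le_exp_one_mul_div_pow d k).trans (by gcongr))
    _ = 2 * k * log (d / s) := by rw [log_pow, log_pow]; push_cast; ring

theorem Real.sqrt_add_le_add_sqrt {x y : ℝ} (hx : 0 ≤ x) (hy : 0 ≤ y) :
    √(x + y) ≤ √x + √y := by
  rw [sqrt_le_iff]
  refine ⟨by positivity, ?_⟩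
  nlinarith [sq_sqrt hx, sq_sqrt hy, mul_nonneg (sqrt_nonneg x) (sqrt_nonneg y)]

theorem Real.sqrt_log_le_of_le_mul_pow {n k : ℕ} {A x : ℝ} (hA : 1 ≤ A) (hx : 0 ≤ x)
    (hn : (n : ℝ) ≤ A * x ^ k) : √(log n) ≤ √(log A) + √(k * x) := by
  rcases n.eq_zero_or_pos with rfl | hn₀
  · simp only [CharP.cast_eq_zero, log_zero, sqrt_zero]; positivity
  have hxk : 0 < x ^ k :=
    pos_of_mul_pos_right ((Nat.cast_pos.mpr hn₀).trans_le hn) (by linarith)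
  have hlog : log n ≤ log A + k * x :=
    calc log n ≤ log (A * x ^ k) := log_le_log (by exact_mod_cast hn₀) hn
      _ = log A + k * log x := by
          rw [log_mul (by positivity) hxk.ne', log_pow]
      _ ≤ log A + k * x := by gcongr; exact log_le_self hx
  exact (sqrt_le_sqrt hlog).trans
    (sqrt_add_le_add_sqrt (log_nonneg hA) (by positivity))

/-- Through `log t ≤ t`, the bound `N ε ≤ A (c r / ε) ^ k` makes `√(log N ε)` at most
`√(log A) + √(k c r) ε ^ (-1/2)`, which is integrable at `0`. -/
theorem integral_sqrt_log_le_of_le_mul_pow {N : ℝ → ℕ} {A c r : ℝ} {k : ℕ} (hr : 0 ≤ r)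
    (hA : 1 ≤ A) (hc : 0 ≤ c)
    (hN : ∀ ε ∈ Set.Ioc 0 r, (N ε : ℝ) ≤ A * (c * r / ε) ^ k) :
    ∫ ε in (0 : ℝ)..r, √(log (N ε)) ≤ (√(log A) + 2 * √(k * c)) * r := by
  have hpow :
      IntervalIntegrable (fun ε : ℝ ↦ √(k * c * r) * ε ^ (-(1 / 2) : ℝ)) volume 0 r :=
    (intervalIntegral.intervalIntegrable_rpow' (by norm_num)).const_mul _
  set g : ℝ → ℝ := fun ε ↦ √(log A) + √(k * c * r) * ε ^ (-(1 / 2) : ℝ)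
  have hfg : ∀ ε ∈ Set.Ioc 0 r, √(log (N ε)) ≤ g ε := fun ε hε ↦ by
    have h := sqrt_log_le_of_le_mul_pow hA (by have := hε.1; positivity) (hN ε hε)
    rwa [← mul_div_assoc, ← mul_assoc, sqrt_div' _ hε.1.le, sqrt_eq_rpow ε,
      div_eq_mul_inv, ← rpow_neg hε.1.le] at h
  have hint : ∫ ε in (0 : ℝ)..r, g ε = (√(log A) + 2 * √(k * c)) * r := by
    have hr2 : r ^ (-(1 / 2) + 1 : ℝ) = √r := by rw [sqrt_eq_rpow]; norm_num
    rw [intervalIntegral.integral_add intervalIntegrable_const hpow,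
      intervalIntegral.integral_const, intervalIntegral.integral_const_mul,
      integral_rpow (Or.inl (by norm_num)), hr2, zero_rpow (by norm_num),
      sqrt_mul' _ hr, smul_eq_mul]
    linear_combination 2 * √(k * c) * mul_self_sqrt hr
  rw [← hint, intervalIntegral.integral_of_le hr, intervalIntegral.integral_of_le hr]
  exact integral_mono_of_nonneg (.of_forall fun ε ↦ sqrt_nonneg _)
    (intervalIntegrable_const.add hpow).1 ((ae_restrict_mem measurableSet_Ioc).mono hfg)

theorem sqrt_log_choose_add_two_mul_sqrt_le {d k s : ℕ} (hs : 0 < s) (hsk : s ≤ k)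
    (hk9 : k ≤ 9 * s) (hkd : k ≤ d) (hds : exp 1 ≤ d / s) :
    √(log (d.choose k)) + 2 * √(k * 3) ≤ 16 * √(s * log (d / s)) := by
  set L := log (d / s)
  have hL : 1 ≤ L := by rwa [le_log_iff_exp_le ((exp_pos 1).trans_le hds)]
  have hlog := log_choose_le_two_mul_log_div hs hsk hkd hds
  have hk9' : (k : ℝ) ≤ 9 * s := by exact_mod_cast hk9
  have hkL : 0 ≤ (k : ℝ) * L := by positivity
  calc √(log (d.choose k)) + 2 * √(k * 3) ≤ 3 * √(3 * k * L) := by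
        linarith [sqrt_le_sqrt (x := log (d.choose k)) (y := 3 * k * L) (by linarith),
          sqrt_le_sqrt (x := k * 3) (y := 3 * k * L) (by nlinarith)]
    _ = √(3 ^ 2 * (3 * k * L)) := by
        rw [sqrt_mul (by norm_num : (0 : ℝ) ≤ 3 ^ 2) (3 * k * L),
          sqrt_sq (by norm_num : (0 : ℝ) ≤ 3)]
    _ ≤ √(16 ^ 2 * (s * L)) := sqrt_le_sqrt (by nlinarith)
    _ = 16 * √(s * L) := by
        rw [sqrt_mul (by norm_num : (0 : ℝ) ≤ 16 ^ 2) (s * L),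
          sqrt_sq (by norm_num : (0 : ℝ) ≤ 16)]

/-- Dudley entropy integral bound: there is a universal constant `C` such that for
`s ≤ d` with `d/s ≥ 3` and `r > 0`, the set `T` of `9s`-sparse vectors of `ℓ₂`-norm at
most `r` satisfies `∫₀^r √(log N(T, ε)) dε ≤ C·r·√(s·log(d/s))`. -/
theorem dudley_entropy_integral_sparse :
    ∃ C : ℝ, 0 < C ∧ ∀ (d s : ℕ), 1 ≤ s → s ≤ d → 3 ≤ (d : ℝ) / s → ∀ r : ℝ, 0 < r →
      (∫ ε in (0 : ℝ)..r, Real.sqrt (Real.log (coveringNumber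
          {v : EuclideanSpace ℝ (Fin d) |
            ((Function.support v).ncard : ℝ) ≤ 9 * s ∧ ‖v‖ ≤ r} ε))) ≤
        C * r * Real.sqrt (s * Real.log ((d : ℝ) / s)) := by
  refine ⟨16, by norm_num, fun d s hs hsd hds r hr ↦ ?_⟩
  set k := min (9 * s) d
  have hkd : k ≤ d := min_le_right _ _
  calc _ ≤ (√(log (d.choose k)) + 2 * √(k * 3)) * r :=
        integral_sqrt_log_le_of_le_mul_pow hr.le (by exact_mod_cast Nat.choose_pos hkd)
          (by norm_num) fun ε hε ↦ coveringNumber_le_choose_mul_pow hkd hε.1 hε.2 fun v hv ↦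
            ⟨le_min (by exact_mod_cast hv.1) ((Set.ncard_le_card _).trans_eq (Nat.card_fin d)),
              hv.2⟩
    _ ≤ 16 * √(s * log (d / s)) * r := by
        gcongr
        exact sqrt_log_choose_add_two_mul_sqrt_le hs (le_min (by omega) hsd) (min_le_left _ _)
          hkd ((exp_one_lt_d9.trans (by norm_num)).le.trans hds)
    _ = 16 * r * √(s * log (d / s)) := by ring
end
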